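/- Let e and k > 1 be positive integers. Suppose that |B ∩ S_{k-1}| ≤ 2^{dim B - 1} + 2^{k-3} for every affine subspace B of 𝔽₂^{2k-2} with dim B ∈ {e, e+1}. Then |A₀₀ ∩ S_{k-1}| + |A₀₁ ∩ S_{k-1}| + |A₁₀ ∩ S_{k-1}| + |A₁₁ ∩ R_{k-1}| ≤ 2^{e+1} + 2^{k-2} for any four pairwise disjoint affine subspaces of the form A₀₀ = a + W, A₀₁ = a + b + W, A₁₀ = a + c + W, A₁₁ = a + b + c + W, where a, b, c ∈ 𝔽₂^{2k-2} and W is an e-dimensional linear subspace of 𝔽₂^{2k-2}. -/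

import Mathlib

/-- The quadratic form `q_k(x) = ∑_{i=1}^k x_i · x_{k+i}` on `𝔽₂^{2k}`. -/
def qForm (k : ℕ) (x : Fin (2 * k) → ZMod 2) : ZMod 2 :=
  ∑ i : Fin k, x ⟨i.1, by have := i.2; omega⟩ * x ⟨k + i.1, by have := i.2; omega⟩

/-- `S_k = {x ∈ 𝔽₂^{2k} : q_k(x) = 1}`. -/
def Sset (k : ℕ) : Set (Fin (2 * k) → ZMod 2) := {x | qForm k x = 1}

/-- `R_k = {x ∈ 𝔽₂^{2k} : q_k(x) = 0}`. -/
def Rset (k : ℕ) : Set (Fin (2 * k) → ZMod 2) := {x | qForm k x = 0}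

/-- `A` is an affine subspace of dimension `d`: a translate `a + W` of a linear
subspace `W` with `dim W = d`. -/
def IsAffineOfDim {V : Type*} [AddCommGroup V] [Module (ZMod 2) V]
    (A : Set V) (d : ℕ) : Prop :=
  ∃ (a : V) (W : Submodule (ZMod 2) V),
    Module.finrank (ZMod 2) W = d ∧ A = (a + ·) '' (W : Set V)

/-!
Let `q` be the form, `B` its polar form, and write `N_z(t)` for the number of points of the coset
`t + W` on which `q = z`. With `Σ(t) = ∑_{w ∈ W} (-1)^{q(t + w)}` one has
`2 N_z(t) = 2^e + (-1)^z Σ(t)`, and the hypothesis in dimension `e + 1` gives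
`N_1(x) + N_1(y) ≤ 2^e + 2^(k-3)` for any two distinct cosets `x + W`, `y + W`. Put
`t = a + b + c`.

If some `u ∈ W^⊥` has `B(t, u) + q(u) = 1`, then `q(t + u + w) = q(t + w) + 1` on `W`, so
`N_0(t) = N_1(t + u)` and the four counts split into two pairs of distinct cosets.

Otherwise `q(u) = B(t, u)` on `W^⊥`, so `W^⊥` is totally isotropic and `W^⊥ ⊆ W^⊥⊥ = W`. For
`y ∉ t + W` some `h ∈ W^⊥ ⊆ W` has `B(y - t, h) = 1`; translation by `h` then flips `q` on
`y + W`, so `Σ(y) = 0` and `N_1(y) = 2^(e-1)`. Finally, expanding `Σ(t)²` and summing the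
characters `w ↦ (-1)^{B(w, h)}` over `W` gives `Σ(t)² ≤ |W| · |W^⊥| = 2^(2k-2)`, which bounds
`N_0(t)`.
-/

open Module QuadraticMap
open LinearMap (BilinForm)

def signChar : AddChar (ZMod 2) ℤ where
  toFun z := if z = 0 then 1 else -1
  map_zero_eq_one' := rfl
  map_add_eq_mul' := by decide

lemma signChar_one : signChar 1 = -1 := rfl

lemma signChar_mul_self (z : ZMod 2) : signChar z * signChar z = 1 := by
  revert z; decide

lemma signChar_eq_one_iff (z : ZMod 2) : signChar z = 1 ↔ z = 0 := by
  revert z; decide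

lemma QuadraticMap.isRefl_polarBilin {R M : Type*} [CommRing R] [AddCommGroup M] [Module R M]
    (Q : QuadraticForm R M) : (polarBilin Q).IsRefl := fun x y h => by
  rwa [polarBilin_apply_apply, polar_comm, ← polarBilin_apply_apply]

section Cosets

variable {R V : Type*} [Ring R] [AddCommGroup V] [Module R V] {W : Submodule R V}

lemma disjoint_image_add_iff {x y : V} :
    Disjoint ((x + ·) '' (W : Set V)) ((y + ·) '' W) ↔ y - x ∉ W := by
  constructor
  · intro h hyx
    exact Set.disjoint_left.1 h ⟨y - x, hyx, add_sub_cancel x y⟩ ⟨0, W.zero_mem, add_zero y⟩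
  · refine fun hyx => Set.disjoint_left.2 ?_
    rintro - ⟨w, hw, rfl⟩ ⟨w', hw', h⟩
    have h : y + w' = w + x := by rw [add_comm w]; exact h
    exact hyx (by rw [sub_eq_sub_iff_add_eq_add.2 h]; exact W.sub_mem hw hw')

lemma add_add_add_le_of_add_le {f : V → ℝ} {C : ℝ} (hf : ∀ x y, y - x ∈ W → f y = f x)
    (hpair : ∀ x y, y - x ∉ W → f x + f y ≤ C) {p q r : V} (hpq : q - p ∉ W) (hpr : r - p ∉ W)
    (hqr : r - q ∉ W) (x : V) : f p + f q + f r + f x ≤ 2 * C := by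
  by_cases hp : x - p ∈ W
  · linarith [hf p x hp, hpair p q hpq, hpair p r hpr]
  by_cases hq : x - q ∈ W
  · linarith [hf q x hq, hpair p q hpq, hpair q r hqr]
  by_cases hr : x - r ∈ W
  · linarith [hf r x hr, hpair p r hpr, hpair q r hqr]
  linarith [hpair p q hpq, hpair r x hr]

end Cosets

lemma Submodule.image_add_sup_span_singleton {V : Type*} [AddCommGroup V] [Module (ZMod 2) V]
    (W : Submodule (ZMod 2) V) (x v : V) :
    (x + ·) '' ((W ⊔ Submodule.span (ZMod 2) {v} : Submodule (ZMod 2) V) : Set V)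
      = (x + ·) '' (W : Set V) ∪ (x + v + ·) '' W := by
  have : ((W ⊔ Submodule.span (ZMod 2) {v} : Submodule (ZMod 2) V) : Set V)
      = (W : Set V) ∪ (v + ·) '' W := by
    ext y
    simp only [SetLike.mem_coe, Submodule.mem_sup, Submodule.mem_span_singleton, Set.mem_union,
      Set.mem_image]
    constructor
    · rintro ⟨w, hw, _, ⟨c, rfl⟩, rfl⟩
      obtain rfl | rfl : c = 0 ∨ c = 1 := by revert c; decide
      · left; simpa using hw
      · right; exact ⟨w, hw, by simp [add_comm]⟩
    · rintro (hy | ⟨w, hw, rfl⟩)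
      · exact ⟨y, hy, 0, ⟨0, zero_smul _ _⟩, add_zero y⟩
      · exact ⟨w, hw, v, ⟨1, one_smul _ _⟩, add_comm w v⟩
  rw [this, Set.image_union, Set.image_image]
  simp only [add_assoc]

section CosetSums

open scoped Classical

variable {V : Type*} [AddCommGroup V] [Module (ZMod 2) V] [Fintype V]
  (Q : QuadraticForm (ZMod 2) V) (W : Submodule (ZMod 2) V)

noncomputable def cosetCount (t : V) (z : ZMod 2) : ℕ :=
  ((t + ·) '' (W : Set V) ∩ {x | Q x = z}).ncard

noncomputable def cosetSum (t : V) : ℤ :=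
  ∑ w : W, signChar (Q (t + w))

lemma card_submodule : Fintype.card W = 2 ^ finrank (ZMod 2) W := by
  rw [Module.card_eq_pow_finrank (K := ZMod 2), ZMod.card]

lemma cosetCount_eq_card_filter (t : V) (z : ZMod 2) :
    cosetCount Q W t z = (Finset.univ.filter fun w : W => Q (t + w) = z).card := by
  have : (t + ·) '' (W : Set V) ∩ {x | Q x = z}
      = (fun w : W => t + (w : V)) '' {w | Q (t + w) = z} := by
    ext x
    constructor
    · rintro ⟨⟨w, hw, rfl⟩, hq⟩
      exact ⟨⟨w, hw⟩, hq, rfl⟩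
    · rintro ⟨w, hq, rfl⟩
      exact ⟨⟨w, w.2, rfl⟩, hq⟩
  rw [cosetCount, this, Set.ncard_image_of_injective _ fun _ _ h => Subtype.ext (add_left_cancel h),
    ← Set.ncard_coe_finset, Finset.coe_filter]
  simp

lemma two_mul_cosetCount (t : V) (z : ZMod 2) :
    2 * (cosetCount Q W t z : ℤ) = 2 ^ finrank (ZMod 2) W + signChar z * cosetSum Q W t := by
  have h (y : ZMod 2) : (if y = z then 2 else 0 : ℤ) = 1 + signChar z * signChar y := by
    revert y z; decide
  rw [cosetCount_eq_card_filter, Finset.card_filter, Nat.cast_sum, Finset.mul_sum, cosetSum,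
    Finset.mul_sum]
  simp only [Nat.cast_ite, Nat.cast_one, Nat.cast_zero, mul_ite, mul_one, mul_zero, h,
    Finset.sum_add_distrib, Finset.sum_const, Finset.card_univ, card_submodule]
  simp

variable {Q W}

lemma cosetSum_add_of_mem {u : V} (hu : u ∈ W) (t : V) :
    cosetSum Q W (t + u) = cosetSum Q W t :=
  Fintype.sum_equiv (Equiv.addLeft ⟨u, hu⟩) _ _ fun w => by simp [add_assoc]

lemma cosetSum_add_eq_neg {t u : V} (hu : u ∈ BilinForm.orthogonal (polarBilin Q) W)
    (h : polar Q t u + Q u = 1) : cosetSum Q W (t + u) = -cosetSum Q W t := by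
  rw [cosetSum, cosetSum, ← Finset.sum_neg_distrib]
  refine Finset.sum_congr rfl fun w _ => ?_
  have hwu : polar Q w u = 0 := hu w w.2
  have : Q (t + u + w) = Q (t + w) + 1 := by
    rw [add_right_comm, QuadraticMap.map_add Q, polar_add_left, hwu, ← h]
    ring
  rw [this, AddChar.map_add_eq_mul, signChar_one, mul_neg_one]

lemma sum_signChar_polar (u : V) :
    ∑ w : W, signChar (polar Q w u)
      = if u ∈ BilinForm.orthogonal (polarBilin Q) W then (Fintype.card W : ℤ) else 0 := by
  split_ifs with hu
  · simp [show ∀ w : W, polar Q w u = 0 from fun w => hu w w.2]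
  · obtain ⟨w, hw, hwu⟩ : ∃ w ∈ W, polar Q w u ≠ 0 := by
      simpa [BilinForm.mem_orthogonal_iff] using hu
    let f : W →+ ZMod 2 := ((polarBilin Q).flip u ∘ₗ W.subtype).toAddMonoidHom
    refine AddChar.sum_eq_zero_of_ne_one (ψ := signChar.compAddMonoidHom f) fun h1 => hwu ?_
    simpa [f, signChar_eq_one_iff] using DFunLike.congr_fun h1 ⟨w, hw⟩

lemma cosetSum_sq (t : V) :
    cosetSum Q W t ^ 2
      = ∑ h : W, signChar (polar Q t h + Q h) * ∑ w : W, signChar (polar Q w h) := by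
  have hshift (w h : W) : signChar (Q (t + w)) * signChar (Q (t + ↑(w + h)))
      = signChar (polar Q t h + Q h) * signChar (polar Q w h) := by
    have : Q (t + ↑(w + h)) = Q (t + w) + ((polar Q t h + Q h) + polar Q w h) := by
      rw [Submodule.coe_add, ← add_assoc, QuadraticMap.map_add Q, polar_add_left]
      ring
    rw [this, AddChar.map_add_eq_mul, AddChar.map_add_eq_mul, ← mul_assoc, signChar_mul_self,
      one_mul]
  calc cosetSum Q W t ^ 2
      = ∑ w : W, ∑ h : W, signChar (Q (t + w)) * signChar (Q (t + ↑(w + h))) := by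
        rw [cosetSum, pow_two, Finset.sum_mul_sum]
        exact Finset.sum_congr rfl fun w _ =>
          Fintype.sum_equiv (Equiv.addLeft w).symm _ _ fun _ => by simp
    _ = _ := by
        simp_rw [hshift, Finset.mul_sum]
        exact Finset.sum_comm

lemma card_filter_mem_orthogonal_le (hQ : (polarBilin Q).Nondegenerate) :
    (Finset.univ.filter fun h : W => ↑h ∈ BilinForm.orthogonal (polarBilin Q) W).card
      ≤ 2 ^ (finrank (ZMod 2) V - finrank (ZMod 2) W) := by
  rw [← Fintype.card_subtype, ← BilinForm.finrank_orthogonal hQ, ← card_submodule]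
  exact Fintype.card_le_of_injective (fun h => ⟨h.1.1, h.2⟩)
    fun _ _ h => Subtype.ext (Subtype.ext (congrArg Subtype.val h :))

lemma cosetSum_sq_le (hQ : (polarBilin Q).Nondegenerate) (t : V) :
    cosetSum Q W t ^ 2 ≤ 2 ^ finrank (ZMod 2) V := by
  have hle : finrank (ZMod 2) W ≤ finrank (ZMod 2) V := Submodule.finrank_le W
  have hsign (z : ZMod 2) : signChar z ≤ 1 := by revert z; decide
  calc cosetSum Q W t ^ 2
      ≤ ∑ h : W,
          if ↑h ∈ BilinForm.orthogonal (polarBilin Q) W then (Fintype.card W : ℤ) else 0 := by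
        rw [cosetSum_sq]
        refine Finset.sum_le_sum fun h _ => ?_
        rw [sum_signChar_polar]
        split_ifs
        · exact mul_le_of_le_one_left (by positivity) (hsign _)
        · simp
    _ = 2 ^ finrank (ZMod 2) W
          * (Finset.univ.filter fun h : W => ↑h ∈ BilinForm.orthogonal (polarBilin Q) W).card := by
        rw [Finset.sum_ite, Finset.sum_const_zero, add_zero, Finset.sum_const, nsmul_eq_mul,
          card_submodule, mul_comm]
        push_cast; rfl
    _ ≤ 2 ^ finrank (ZMod 2) W * 2 ^ (finrank (ZMod 2) V - finrank (ZMod 2) W) := by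
        gcongr
        exact_mod_cast card_filter_mem_orthogonal_le hQ
    _ = 2 ^ finrank (ZMod 2) V := by rw [← pow_add, Nat.add_sub_cancel' hle]

lemma cosetCount_add_of_mem {u : V} (hu : u ∈ W) (t : V) (z : ZMod 2) :
    cosetCount Q W (t + u) z = cosetCount Q W t z := by
  have h := two_mul_cosetCount Q W (t + u) z
  rw [cosetSum_add_of_mem hu, ← two_mul_cosetCount] at h
  omega

lemma orthogonal_le_of_forall_polar_add_eq_zero (hQ : (polarBilin Q).Nondegenerate) {t : V}
    (h : ∀ u ∈ BilinForm.orthogonal (polarBilin Q) W, polar Q t u + Q u = 0) :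
    BilinForm.orthogonal (polarBilin Q) W ≤ W := by
  have hiso : BilinForm.orthogonal (polarBilin Q) W
      ≤ BilinForm.orthogonal (polarBilin Q) (BilinForm.orthogonal (polarBilin Q) W) :=
    fun u hu u' hu' => by
      have := h (u' + u) (add_mem hu' hu)
      rw [polar_add_right, QuadraticMap.map_add Q] at this
      simp only [polarBilin_apply_apply]
      linear_combination this - h u' hu' - h u hu
  rwa [BilinForm.orthogonal_orthogonal hQ (isRefl_polarBilin Q)] at hiso

lemma cosetSum_eq_zero_of_forall_polar_add_eq_zero (hQ : (polarBilin Q).Nondegenerate) {t y : V}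
    (h : ∀ u ∈ BilinForm.orthogonal (polarBilin Q) W, polar Q t u + Q u = 0) (hy : y - t ∉ W) :
    cosetSum Q W y = 0 := by
  rw [← BilinForm.orthogonal_orthogonal hQ (isRefl_polarBilin Q) W] at hy
  obtain ⟨u, hu, hne⟩ : ∃ u ∈ BilinForm.orthogonal (polarBilin Q) W, polar Q u (y - t) ≠ 0 := by
    simpa [BilinForm.mem_orthogonal_iff] using hy
  have hyu : polar Q y u + Q u = 1 := by
    have h1 : polar Q (y - t) u = 1 := by
      rw [polar_comm]; exact (by decide : ∀ z : ZMod 2, z ≠ 0 → z = 1) _ hne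
    rw [← sub_add_cancel y t, polar_add_left, h1]
    linear_combination h u hu
  have hneg := cosetSum_add_eq_neg hu hyu
  rw [cosetSum_add_of_mem (orthogonal_le_of_forall_polar_add_eq_zero hQ h hu)] at hneg
  omega

lemma cosetCount_sup_span_singleton {v : V} (hv : v ∉ W) (t : V) (z : ZMod 2) :
    cosetCount Q (W ⊔ Submodule.span (ZMod 2) {v}) t z
      = cosetCount Q W t z + cosetCount Q W (t + v) z := by
  rw [cosetCount, Submodule.image_add_sup_span_singleton, Set.union_inter_distrib_right,
    Set.ncard_union_eq _ (Set.toFinite _) (Set.toFinite _)]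
  · rfl
  · exact (disjoint_image_add_iff.2 (by simpa using hv)).mono Set.inter_subset_left
      Set.inter_subset_left

theorem cosetCount_add_add_add_le (hQ : (polarBilin Q).Nondegenerate) {m : ℕ}
    (hV : finrank (ZMod 2) V = 2 * m)
    (hpair : ∀ x y, y - x ∉ W →
      (cosetCount Q W x 1 : ℝ) + cosetCount Q W y 1 ≤ 2 ^ finrank (ZMod 2) W + 2 ^ m / 4)
    {p q r t : V} (hpq : q - p ∉ W) (hpr : r - p ∉ W) (hqr : r - q ∉ W) (hpt : t - p ∉ W)
    (hqt : t - q ∉ W) (hrt : t - r ∉ W) :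
    (cosetCount Q W p 1 : ℝ) + cosetCount Q W q 1 + cosetCount Q W r 1 + cosetCount Q W t 0
      ≤ 2 * 2 ^ finrank (ZMod 2) W + 2 ^ m / 2 := by
  have hcount (y : V) (z : ZMod 2) : 2 * (cosetCount Q W y z : ℝ)
      = 2 ^ finrank (ZMod 2) W + signChar z * cosetSum Q W y := by
    exact_mod_cast two_mul_cosetCount Q W y z
  by_cases h : ∃ u ∈ BilinForm.orthogonal (polarBilin Q) W, polar Q t u + Q u = 1
  · obtain ⟨u, hu, htu⟩ := h
    have hflip : (cosetCount Q W t 0 : ℝ) = cosetCount Q W (t + u) 1 := by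
      have h0 := hcount t 0
      have h1 := hcount (t + u) 1
      rw [AddChar.map_zero_eq_one] at h0
      rw [cosetSum_add_eq_neg hu htu, signChar_one] at h1
      push_cast at h0 h1
      linarith
    rw [hflip]
    have := add_add_add_le_of_add_le (f := fun x => (cosetCount Q W x 1 : ℝ))
      (fun x y hxy => by simp only [← cosetCount_add_of_mem hxy x 1, add_sub_cancel])
      hpair hpq hpr hqr (t + u)
    linarith
  · simp only [not_exists, not_and] at h
    have h0 (u) (hu : u ∈ BilinForm.orthogonal (polarBilin Q) W) : polar Q t u + Q u = 0 :=
      (by decide : ∀ z : ZMod 2, z ≠ 1 → z = 0) _ (h u hu)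
    have hhalf (y : V) (hy : t - y ∉ W) :
        2 * (cosetCount Q W y 1 : ℝ) = 2 ^ finrank (ZMod 2) W := by
      rw [hcount, cosetSum_eq_zero_of_forall_polar_add_eq_zero hQ h0 (mt sub_mem_comm_iff.1 hy)]
      simp
    have hsq : |(cosetSum Q W t : ℝ)| ≤ 2 ^ m := by
      refine abs_le_of_sq_le_sq ?_ (by positivity)
      rw [← pow_mul, mul_comm, ← hV]
      exact_mod_cast cosetSum_sq_le hQ t
    have ht := hcount t 0
    rw [AddChar.map_zero_eq_one] at ht
    push_cast at ht
    linarith [hhalf p hpt, hhalf q hqt, hhalf r hrt, le_abs_self (cosetSum Q W t : ℝ)]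

end CosetSums

section Hyperbolic

variable {m : ℕ}

def hypIdx₁ (i : Fin m) : Fin (2 * m) := ⟨i, by omega⟩

def hypIdx₂ (i : Fin m) : Fin (2 * m) := ⟨m + i, by omega⟩

@[simp] lemma hypIdx₁_inj {i j : Fin m} : hypIdx₁ i = hypIdx₁ j ↔ i = j := by
  simp [hypIdx₁, Fin.ext_iff]

@[simp] lemma hypIdx₂_inj {i j : Fin m} : hypIdx₂ i = hypIdx₂ j ↔ i = j := by
  simp [hypIdx₂, Fin.ext_iff]

@[simp] lemma hypIdx₁_ne_hypIdx₂ (i j : Fin m) : hypIdx₁ i ≠ hypIdx₂ j := by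
  simp [hypIdx₁, hypIdx₂, Fin.ext_iff]; omega

variable (m) in
def hyperbolicForm : QuadraticForm (ZMod 2) (Fin (2 * m) → ZMod 2) :=
  ∑ i : Fin m, linMulLin (LinearMap.proj (hypIdx₁ i)) (LinearMap.proj (hypIdx₂ i))

lemma hyperbolicForm_apply (x : Fin (2 * m) → ZMod 2) : hyperbolicForm m x = qForm m x := by
  simp [hyperbolicForm, qForm, QuadraticMap.linMulLin_apply, hypIdx₁, hypIdx₂]

lemma polar_hyperbolicForm (x y : Fin (2 * m) → ZMod 2) :
    polar (hyperbolicForm m) x y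
      = ∑ i : Fin m, (x (hypIdx₁ i) * y (hypIdx₂ i) + y (hypIdx₁ i) * x (hypIdx₂ i)) := by
  simp only [polar, hyperbolicForm_apply, qForm, Pi.add_apply, ← Finset.sum_sub_distrib]
  exact Finset.sum_congr rfl fun _ _ => by simp only [hypIdx₁, hypIdx₂]; ring

lemma nondegenerate_polarBilin_hyperbolicForm : (polarBilin (hyperbolicForm m)).Nondegenerate := by
  refine (isRefl_polarBilin _).nondegenerate_iff_separatingLeft.2 fun x hx => ?_
  have h₁ (i : Fin m) : x (hypIdx₁ i) = 0 := by
    simpa [polar_hyperbolicForm, Pi.single_apply] using hx (Pi.single (hypIdx₂ i) 1)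
  have h₂ (i : Fin m) : x (hypIdx₂ i) = 0 := by
    simpa [polar_hyperbolicForm, Pi.single_apply] using hx (Pi.single (hypIdx₁ i) 1)
  funext j
  rcases lt_or_ge j.1 m with hj | hj
  · exact h₁ ⟨j, hj⟩
  · simpa [hypIdx₂, Nat.add_sub_cancel' hj] using h₂ ⟨j - m, by omega⟩

lemma Sset_eq_setOf_hyperbolicForm : Sset m = {x | hyperbolicForm m x = 1} := by
  ext; simp [Sset, hyperbolicForm_apply]

lemma Rset_eq_setOf_hyperbolicForm : Rset m = {x | hyperbolicForm m x = 0} := by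
  ext; simp [Rset, hyperbolicForm_apply]

end Hyperbolic

theorem stmt_8_general (e k : ℕ) (hk : 1 < k)
    (hhyp : ∀ (B : Set (Fin (2 * (k - 1)) → ZMod 2)) (dB : ℕ),
      IsAffineOfDim B dB → (dB = e ∨ dB = e + 1) →
      ((B ∩ Sset (k - 1)).ncard : ℝ) ≤ 2 ^ ((dB : ℤ) - 1) + 2 ^ ((k : ℤ) - 3))
    (a b c : Fin (2 * (k - 1)) → ZMod 2)
    (W : Submodule (ZMod 2) (Fin (2 * (k - 1)) → ZMod 2))
    (hW : Module.finrank (ZMod 2) W = e)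
    (hdisj : ([(a + ·) '' (W : Set _), (a + b + ·) '' (W : Set _),
        (a + c + ·) '' (W : Set _), (a + b + c + ·) '' (W : Set _)] :
        List (Set (Fin (2 * (k - 1)) → ZMod 2))).Pairwise Disjoint) :
    (((a + ·) '' (W : Set _) ∩ Sset (k - 1)).ncard : ℝ)
        + (((a + b + ·) '' (W : Set _) ∩ Sset (k - 1)).ncard : ℝ)
        + (((a + c + ·) '' (W : Set _) ∩ Sset (k - 1)).ncard : ℝ)
        + (((a + b + c + ·) '' (W : Set _) ∩ Rset (k - 1)).ncard : ℝ)
      ≤ 2 ^ ((e : ℤ) + 1) + 2 ^ ((k : ℤ) - 2) := by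
  have hpow (j : ℤ) : (2 : ℝ) ^ ((k : ℤ) - j) = 2 ^ (k - 1) * 2 ^ (1 - j) := by
    rw [← zpow_natCast, ← zpow_add₀ two_ne_zero]; congr 1; omega
  have hpair (x y) (hxy : y - x ∉ W) :
      (cosetCount (hyperbolicForm (k - 1)) W x 1 : ℝ) + cosetCount (hyperbolicForm (k - 1)) W y 1
        ≤ 2 ^ finrank (ZMod 2) W + 2 ^ (k - 1) / 4 := by
    have hB := hhyp _ (e + 1)
      ⟨x, _, by rw [Submodule.finrank_sup_span_singleton hxy, hW], rfl⟩ (Or.inr rfl)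
    rw [Sset_eq_setOf_hyperbolicForm, ← cosetCount, cosetCount_sup_span_singleton hxy,
      add_sub_cancel, hpow] at hB
    push_cast [add_sub_cancel_right, zpow_natCast] at hB
    norm_num at hB
    rw [hW]
    linarith
  simp only [List.pairwise_cons, List.mem_cons, List.not_mem_nil, or_false, forall_eq_or_imp,
    forall_eq, List.Pairwise.nil, and_true, disjoint_image_add_iff] at hdisj
  obtain ⟨⟨h01, h02, h03⟩, ⟨h12, h13⟩, h23, -⟩ := hdisj
  have := cosetCount_add_add_add_le nondegenerate_polarBilin_hyperbolicForm
    (Module.finrank_fin_fun _) hpair h01 h02 h12 h03 h13 h23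
  rw [Sset_eq_setOf_hyperbolicForm, Rset_eq_setOf_hyperbolicForm, hpow,
    zpow_add_one₀ two_ne_zero, zpow_natCast, ← hW]
  refine this.trans_eq ?_
  norm_num
  ring

theorem stmt_8 (e k : ℕ) (he : 0 < e) (hk : 1 < k)
    (hhyp : ∀ (B : Set (Fin (2 * (k - 1)) → ZMod 2)) (dB : ℕ),
      IsAffineOfDim B dB → (dB = e ∨ dB = e + 1) →
      ((B ∩ Sset (k - 1)).ncard : ℝ) ≤ 2 ^ ((dB : ℤ) - 1) + 2 ^ ((k : ℤ) - 3))
    (a b c : Fin (2 * (k - 1)) → ZMod 2)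
    (W : Submodule (ZMod 2) (Fin (2 * (k - 1)) → ZMod 2))
    (hW : Module.finrank (ZMod 2) W = e)
    (hdisj : ([(a + ·) '' (W : Set _), (a + b + ·) '' (W : Set _),
        (a + c + ·) '' (W : Set _), (a + b + c + ·) '' (W : Set _)] :
        List (Set (Fin (2 * (k - 1)) → ZMod 2))).Pairwise Disjoint) :
    (((a + ·) '' (W : Set _) ∩ Sset (k - 1)).ncard : ℝ)
        + (((a + b + ·) '' (W : Set _) ∩ Sset (k - 1)).ncard : ℝ)
        + (((a + c + ·) '' (W : Set _) ∩ Sset (k - 1)).ncard : ℝ)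
        + (((a + b + c + ·) '' (W : Set _) ∩ Rset (k - 1)).ncard : ℝ)
      ≤ 2 ^ ((e : ℤ) + 1) + 2 ^ ((k : ℤ) - 2) :=
  stmt_8_general e k hk hhyp a b c W hW hdisj
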